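/- arXiv:2403.04676 — 6 statements merged into one kernel-verified Lean document; each statement's English description precedes it below -/
import Mathlib

section
/- An element a of a commutative ring R is von Neumann regular (a = a²x for some x) if and only if R/Ra is a flat R-module. -/
/-- An element `a` of a commutative ring `R` is von Neumann regular if and only if
`R/Ra` is a flat `R`-module. -/
theorem vonNeumannRegular_elem_iff_quotient_flat (R : Type*) [CommRing R] (a : R) :
    (∃ x : R, a = a ^ 2 * x) ↔ Module.Flat R (R ⧸ Ideal.span {a}) := by
  constructor
  · rintro ⟨x, hx⟩
    set I := Ideal.span {a} with hI
    -- the retraction: R/(a) → R, mk r ↦ r * (1 - a*x)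
    have hker : I ≤ LinearMap.ker (LinearMap.mulLeft R (1 - a * x)) := by
      rw [hI, Ideal.span_le, Set.singleton_subset_iff]
      simp only [SetLike.mem_coe, LinearMap.mem_ker, LinearMap.mulLeft_apply]
      have : (1 - a * x) * a = a - a ^ 2 * x := by ring
      rw [this, ← hx, sub_self]
    let i : (R ⧸ I) →ₗ[R] R := Submodule.liftQ I (LinearMap.mulLeft R (1 - a * x)) hker
    have : (Submodule.mkQ I).comp i = LinearMap.id := by
      apply Submodule.linearMap_qext
      refine LinearMap.ext fun r => ?_
      simp only [LinearMap.comp_apply, Submodule.mkQ_apply, LinearMap.id_apply, i,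
        Submodule.liftQ_apply, LinearMap.mulLeft_apply]
      rw [Submodule.Quotient.eq]
      have h3 : (1 - a * x) * r - r = a * (-(x * r)) := by ring
      rw [h3]
      exact Ideal.mul_mem_right _ _ (Ideal.subset_span rfl)
    exact Module.Flat.of_retract i (Submodule.mkQ I) this
  · intro hflat
    have h : ∑ _i : PUnit.{1}, a • (Ideal.Quotient.mk (Ideal.span {a}) 1) = 0 := by
      have : a • (Ideal.Quotient.mk (Ideal.span {a}) 1) =
          Ideal.Quotient.mk (Ideal.span {a}) a := by
        show a • Submodule.mkQ (Ideal.span {a}) (1 : R) = _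
        rw [← map_smul, smul_eq_mul, mul_one]
        rfl
      simp only [Finset.sum_const, Finset.card_univ, Fintype.card_unit, one_smul, this,
        Ideal.Quotient.eq_zero_iff_mem]
      exact Ideal.subset_span rfl
    obtain ⟨κ, c, y, hy, hc⟩ :=
      Module.Flat.isTrivialRelation_of_sum_smul_eq_zero (f := fun _ : PUnit => a)
        (x := fun _ => Ideal.Quotient.mk (Ideal.span {a}) 1) h
    -- lift each y j to R
    choose r hr using fun j => Ideal.Quotient.mk_surjective (y j)
    have h1 : (Ideal.Quotient.mk (Ideal.span {a})) (∑ j, c PUnit.unit j * r j) = 1 := by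
      rw [map_sum]
      have := hy PUnit.unit
      simp only [← hr] at this
      simpa [map_mul, ← this] using this.symm ▸ rfl
    -- so 1 - ∑ c j * r j ∈ (a)
    have h2 : (1 : R) - ∑ j, c PUnit.unit j * r j ∈ Ideal.span {a} := by
      rw [← Ideal.Quotient.eq_zero_iff_mem, map_sub, h1, map_one, sub_self]
    obtain ⟨t, ht⟩ := Ideal.mem_span_singleton'.mp h2
    refine ⟨t, ?_⟩
    have ha : ∀ j, a * c PUnit.unit j = 0 := by
      intro j
      simpa using hc j
    have : a * (1 - ∑ j, c PUnit.unit j * r j) = a * (t * a) := by rw [ht]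
    calc a = a * 1 - a * ∑ j, c PUnit.unit j * r j := by
            rw [Finset.mul_sum]
            simp only [← mul_assoc, ha, zero_mul, Finset.sum_const_zero, mul_one, sub_zero]
      _ = a * (1 - ∑ j, c PUnit.unit j * r j) := by ring
      _ = a ^ 2 * t := by rw [← ht]; ring
end

section
/- Every S-flat R-module is flat if and only if every S-torsion R-module is flat. -/
universe u v

open TensorProduct

/-- Flatness is closed under extensions: if a submodule `K` of `M` and the quotient `M ⧸ K`
are both flat, then `M` is flat. -/
lemma flat_of_submodule_flat_of_quotient_flat {R : Type*} [CommRing R] {M : Type*}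
    [AddCommGroup M] [Module R M] (K : Submodule R M)
    (hK : Module.Flat R K) (hQ : Module.Flat R (M ⧸ K)) : Module.Flat R M := by
  rw [Module.Flat.iff_rTensor_injective']
  intro I
  rw [injective_iff_map_eq_zero]
  intro x hx
  -- push `x` to `I ⊗ (M ⧸ K)`; it dies there since `M ⧸ K` is flat
  have h1 : (LinearMap.rTensor (M ⧸ K) I.subtype) ((LinearMap.lTensor I K.mkQ) x) = 0 := by
    rw [← LinearMap.comp_apply, LinearMap.rTensor_comp_lTensor, ← LinearMap.lTensor_comp_rTensor,
      LinearMap.comp_apply, hx, map_zero]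
  have h2 : (LinearMap.lTensor I K.mkQ) x = 0 :=
    (injective_iff_map_eq_zero _).mp ((Module.Flat.iff_rTensor_injective' (R := R) (M := M ⧸ K)).mp hQ I) _ h1
  -- hence `x` comes from `I ⊗ K` by right exactness
  have hexact : Function.Exact (LinearMap.lTensor I K.subtype) (LinearMap.lTensor I K.mkQ) :=
    lTensor_exact (I : Type _) (LinearMap.exact_subtype_mkQ K) (Submodule.mkQ_surjective K)
  obtain ⟨y, rfl⟩ := (hexact x).mp h2
  have h3 : (LinearMap.lTensor R K.subtype) ((LinearMap.rTensor K I.subtype) y) = 0 := by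
    rw [← LinearMap.comp_apply, LinearMap.lTensor_comp_rTensor, ← LinearMap.rTensor_comp_lTensor,
      LinearMap.comp_apply, hx]
  have h4 : (LinearMap.rTensor K I.subtype) y = 0 := by
    have hinj : Function.Injective (LinearMap.lTensor R K.subtype) :=
      Module.Flat.lTensor_preserves_injective_linearMap K.subtype K.injective_subtype
    exact (injective_iff_map_eq_zero _).mp hinj _ h3
  have h5 : y = 0 :=
    (injective_iff_map_eq_zero _).mp ((Module.Flat.iff_rTensor_injective' (R := R) (M := K)).mp hK I) _ h4
  rw [h5, map_zero]

/-- If every `S`-torsion module (in universe `max u v`) is flat, then for `s ∈ S` we can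
write `s = r * s * s` for some `r`. -/
lemma exists_mul_self_of_torsion_flat {R : Type u} [CommRing R] (S : Submonoid R)
    (h : ∀ (M : Type (max u v)) [AddCommGroup M] [Module R M],
        (∀ m : M, ∃ s ∈ S, s • m = 0) → Module.Flat R M)
    (s : S) : ∃ r : R, (s : R) = r * s * s := by
  set I : Ideal R := Ideal.span {(s : R)} with hI
  -- `R ⧸ I` is S-torsion, hence flat
  have hflat : Module.Flat R (R ⧸ I) := by
    have htors : ∀ m : ULift.{v} (R ⧸ I), ∃ t ∈ S, t • m = 0 := by
      rintro ⟨q⟩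
      obtain ⟨a, rfl⟩ := Submodule.Quotient.mk_surjective I q
      refine ⟨s, s.2, ?_⟩
      have : (s : R) • (Submodule.Quotient.mk a : R ⧸ I) = 0 := by
        rw [← Submodule.Quotient.mk_smul, Submodule.Quotient.mk_eq_zero]
        exact Ideal.mem_span_singleton.mpr ⟨a, by rw [smul_eq_mul]⟩
      exact ULift.ext _ _ this
    have := h (ULift.{v} (R ⧸ I)) htors
    exact Module.Flat.of_ulift (R := R) (M := R ⧸ I)
  -- the element `s ⊗ 1` dies in `R ⊗ (R ⧸ I)`, hence in `I ⊗ (R ⧸ I)` by flatness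
  have hinj : Function.Injective (LinearMap.rTensor (R ⧸ I) I.subtype) :=
    (Module.Flat.iff_rTensor_injective' (R := R) (M := R ⧸ I)).mp hflat I
  have hsI : (s : R) ∈ I := Ideal.subset_span rfl
  have hx0 : ((⟨(s : R), hsI⟩ : I) ⊗ₜ[R] (1 : R ⧸ I) : TensorProduct R I (R ⧸ I)) = 0 := by
    apply hinj
    have h1 : (LinearMap.rTensor (R ⧸ I) I.subtype)
        ((⟨(s : R), hsI⟩ : I) ⊗ₜ[R] (1 : R ⧸ I)) = (s : R) ⊗ₜ[R] (1 : R ⧸ I) := rfl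
    rw [h1, map_zero]
    have h2 : ((s : R) ⊗ₜ[R] (1 : R ⧸ I) : R ⊗[R] (R ⧸ I))
        = ((1 : R) ⊗ₜ[R] ((s : R) • (1 : R ⧸ I)) : TensorProduct R R (R ⧸ I)) := by
      rw [← smul_tmul]
      congr 1
      rw [smul_eq_mul, mul_one]
    rw [h2]
    have h3 : (s : R) • (1 : R ⧸ I) = 0 := by
      rw [show (1 : R ⧸ I) = Submodule.Quotient.mk (1 : R) from rfl,
        ← Submodule.Quotient.mk_smul, Submodule.Quotient.mk_eq_zero]
      rw [smul_eq_mul, mul_one]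
      exact hsI
    rw [h3, tmul_zero]
  -- transfer through `I ⊗ (R ⧸ I) ≃ I ⧸ (I • ⊤)`
  have hmem : (⟨(s : R), hsI⟩ : I) ∈ (I • (⊤ : Submodule R I)) := by
    have h0 : (TensorProduct.tensorQuotEquivQuotSMul (↥I) I)
        ((⟨(s : R), hsI⟩ : I) ⊗ₜ[R] (1 : R ⧸ I)) = 0 := by
      exact (LinearEquiv.map_eq_zero_iff _).mpr hx0
    have h1 : (1 : R ⧸ I) = Ideal.Quotient.mk I (1 : R) := rfl
    rw [h1, TensorProduct.tensorQuotEquivQuotSMul_tmul_mk, one_smul] at h0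
    exact (Submodule.Quotient.mk_eq_zero _).mp h0
  have hmem' : (s : R) ∈ I * I := by
    have : (s : R) ∈ Submodule.map I.subtype (I • (⊤ : Submodule R I)) :=
      ⟨_, hmem, rfl⟩
    rwa [Submodule.map_smul'', Submodule.map_subtype_top, Ideal.smul_eq_mul] at this
  rw [hI, Ideal.span_singleton_mul_span_singleton, Ideal.mem_span_singleton'] at hmem'
  obtain ⟨r, hr⟩ := hmem'
  exact ⟨r, by linear_combination -hr⟩

/-- Every S-flat R-module is flat if and only if every S-torsion R-module is flat. -/
theorem sFlat_implies_flat_iff_sTorsion_implies_flat (R : Type u) [CommRing R]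
    (S : Submonoid R) (hS : (0 : R) ∉ S) :
    (∀ (M : Type (max u v)) [AddCommGroup M] [Module R M],
        Module.Flat (Localization S) (LocalizedModule S M) → Module.Flat R M) ↔
      (∀ (M : Type (max u v)) [AddCommGroup M] [Module R M],
        (∀ m : M, ∃ s ∈ S, s • m = 0) → Module.Flat R M) := by
  constructor
  · -- S-flat ⇒ flat implies S-torsion ⇒ flat
    intro h M _ _ hM
    apply h M
    have hsub : Subsingleton (LocalizedModule S M) := by
      constructor
      have hz : ∀ x : LocalizedModule S M, x = 0 := by
        intro x
        induction x using LocalizedModule.induction_on with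
        | h m t =>
          obtain ⟨s', hs'S, hs'⟩ := hM m
          rw [show (0 : LocalizedModule S M) = LocalizedModule.mk 0 1 from
            (LocalizedModule.zero_mk 1).symm, LocalizedModule.mk_eq]
          exact ⟨⟨s', hs'S⟩, by simp [Submonoid.smul_def, hs']⟩
      intro a b; rw [hz a, hz b]
    infer_instance
  · -- S-torsion ⇒ flat implies S-flat ⇒ flat
    intro h M _ _ hM
    -- every s ∈ S satisfies s = r * s * s
    have key : ∀ s : S, ∃ r : R, (s : R) = r * s * s :=
      exists_mul_self_of_torsion_flat.{u, v} S h
    -- hence the localization map M → M_S is surjective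
    have hsurj : Function.Surjective (LocalizedModule.mkLinearMap S M) := by
      intro x
      induction x using LocalizedModule.induction_on with
      | h m t =>
        obtain ⟨r, hr⟩ := key t
        refine ⟨r • m, ?_⟩
        rw [LocalizedModule.mkLinearMap_apply, LocalizedModule.mk_eq]
        refine ⟨t, ?_⟩
        rw [one_smul, Submonoid.smul_def, Submonoid.smul_def, Submonoid.smul_def,
          smul_smul, smul_smul]
        congr 1
        linear_combination -hr
    -- the kernel of the localization map is S-torsion, hence flat
    set K := LinearMap.ker (LocalizedModule.mkLinearMap S M) with hK
    have hKtors : ∀ k : K, ∃ s ∈ S, s • k = 0 := by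
      rintro ⟨k, hk⟩
      rw [LinearMap.mem_ker] at hk
      obtain ⟨s', hs'⟩ :=
        (IsLocalizedModule.eq_zero_iff S (LocalizedModule.mkLinearMap S M)).mp hk
      refine ⟨s', s'.2, ?_⟩
      apply Subtype.ext
      simpa [Submonoid.smul_def] using hs'
    have hKflat : Module.Flat R K := h K hKtors
    -- the localized module is flat over R
    haveI : Module.Flat (Localization S) (LocalizedModule S M) := hM
    have hLocFlat : Module.Flat R (LocalizedModule S M) :=
      Module.Flat.trans R (Localization S) (LocalizedModule S M)
    -- the quotient M ⧸ K is isomorphic to the localized module, hence flat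
    have hQflat : Module.Flat R (M ⧸ K) :=
      Module.Flat.of_linearEquiv
        (LinearMap.quotKerEquivOfSurjective _ hsurj)
    exact flat_of_submodule_flat_of_quotient_flat K hKflat hQflat
end

section
/- Every S-torsion R-module is flat if and only if R/Rs is a von Neumann regular ring for every s ∈ S. -/
open TensorProduct LinearMap

private lemma span_finset_idem {A : Type*} [CommRing A] (h : ∀ t : A, ∃ u, t = t ^ 2 * u)
    (T : Finset A) : ∃ f : A, f * f = f ∧ Ideal.span (T : Set A) = Ideal.span {f} := by
  classical
  induction T using Finset.induction_on with
  | empty =>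
    exact ⟨0, by ring, by rw [Finset.coe_empty, Ideal.span_empty, eq_comm,
      Ideal.span_singleton_eq_bot]⟩
  | @insert a T _ ih =>
    obtain ⟨f, hf, hspan⟩ := ih
    obtain ⟨u, hu⟩ := h a
    have he : (a * u) * (a * u) = a * u := by linear_combination (-u) * hu
    have hae : Ideal.span {a} = Ideal.span ({a * u} : Set A) := by
      apply le_antisymm <;> rw [Ideal.span_singleton_le_iff_mem, Ideal.mem_span_singleton']
      · exact ⟨a, by linear_combination -hu⟩
      · exact ⟨u, by ring⟩
    refine ⟨a * u + f - (a * u) * f,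
      by linear_combination (1 - 2*f + f*f) * he + (1 - a*u) * hf, ?_⟩
    rw [Finset.coe_insert, Ideal.span_insert, hae, hspan]
    apply le_antisymm
    · apply sup_le <;> rw [Ideal.span_singleton_le_iff_mem, Ideal.mem_span_singleton']
      · exact ⟨a * u, by linear_combination (1 - f) * he⟩
      · exact ⟨f, by linear_combination (1 - a*u) * hf⟩
    · rw [Ideal.span_singleton_le_iff_mem]
      refine Submodule.mem_sup.mpr ⟨(1 - f) * (a * u),
        Ideal.mem_span_singleton'.mpr ⟨1 - f, rfl⟩, f, Ideal.mem_span_singleton_self f, by ring⟩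

private lemma flat_of_vnr {A : Type*} [CommRing A] (h : ∀ t : A, ∃ u, t = t ^ 2 * u)
    (M : Type*) [AddCommGroup M] [Module A M] : Module.Flat A M := by
  rw [Module.Flat.iff_rTensor_injective]
  intro I hI
  obtain ⟨T, hT⟩ := hI
  obtain ⟨f, hf, hspan⟩ := span_finset_idem h T
  have hIs : I = Ideal.span {f} := by rw [← hT, hspan]
  subst hIs
  set J := Ideal.span ({f} : Set A) with hJ
  have hfJ : f ∈ J := Ideal.mem_span_singleton_self f
  have hsurj : ∀ z : ↥J ⊗[A] M, ∃ m : M, (⟨f, hfJ⟩ : ↥J) ⊗ₜ[A] m = z := by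
    intro z
    induction z with
    | zero => exact ⟨0, tmul_zero _ _⟩
    | tmul a m =>
      obtain ⟨r, hr⟩ := Ideal.mem_span_singleton'.mp a.2
      refine ⟨r • m, ?_⟩
      rw [← smul_tmul]
      congr 1
      exact Subtype.ext (by simpa [smul_eq_mul, mul_comm] using hr)
    | add z₁ z₂ ih₁ ih₂ =>
      obtain ⟨m₁, hm₁⟩ := ih₁
      obtain ⟨m₂, hm₂⟩ := ih₂
      exact ⟨m₁ + m₂, by rw [tmul_add, hm₁, hm₂]⟩
  rw [injective_iff_map_eq_zero]
  intro z hz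
  obtain ⟨m, rfl⟩ := hsurj z
  rw [rTensor_tmul] at hz
  have hfm : f • m = 0 := by
    have := congrArg (TensorProduct.lid A M) hz
    simpa using this
  have hstep : (⟨f, hfJ⟩ : ↥J) = f • (⟨f, hfJ⟩ : ↥J) :=
    Subtype.ext (by simp [smul_eq_mul, hf])
  rw [hstep, smul_tmul, hfm, tmul_zero]

private lemma flat_quot_idem {R : Type*} [CommRing R] {e : R} (he : e * e = e) :
    Module.Flat R (R ⧸ Ideal.span {e}) := by
  set I := Ideal.span ({e} : Set R) with hI
  have hker : I ≤ ker (LinearMap.mulRight R (1 - e)) := by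
    rw [hI, Ideal.span_le]
    rintro x rfl
    simp only [SetLike.mem_coe, mem_ker, mulRight_apply]
    linear_combination -he
  refine Module.Flat.of_retract (Submodule.liftQ I (LinearMap.mulRight R (1 - e)) hker)
    I.mkQ ?_
  apply Submodule.linearMap_qext
  refine LinearMap.ext fun x => ?_
  simp only [coe_comp, Function.comp_apply, Submodule.mkQ_apply, Submodule.liftQ_apply,
    mulRight_apply, id_coe, id_eq]
  rw [Submodule.Quotient.eq]
  exact Ideal.mem_span_singleton'.mpr ⟨-x, by ring⟩

private lemma flat_of_torsionBy {R : Type*} [CommRing R] (S : Submonoid R)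
    (hreg : ∀ s ∈ S, ∀ t : R ⧸ Ideal.span {s}, ∃ u, t = t ^ 2 * u)
    {s : R} (hs : s ∈ S) (M : Type*) [AddCommGroup M] [Module R M]
    (hsm : ∀ m : M, s • m = 0) : Module.Flat R M := by
  -- obtain s = s^2 * c
  obtain ⟨u, hu⟩ := hreg (s * s) (S.mul_mem hs hs) (Ideal.Quotient.mk _ s)
  obtain ⟨c, rfl⟩ := Ideal.Quotient.mk_surjective u
  rw [← map_pow, ← map_mul, Ideal.Quotient.mk_eq_mk_iff_sub_mem] at hu
  obtain ⟨d, hd⟩ := Ideal.mem_span_singleton'.mp hu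
  -- hd : d * (s * s) = s - s^2 * c
  have hss : s = s * s * (c + d) := by linear_combination -hd
  set e := s * (c + d) with he_def
  have he : e * e = e := by rw [he_def]; linear_combination (-(c + d)) * hss
  have hspan : Ideal.span ({s} : Set R) = Ideal.span {e} := by
    apply le_antisymm <;> rw [Ideal.span_singleton_le_iff_mem, Ideal.mem_span_singleton']
    · exact ⟨s, by rw [he_def]; linear_combination -hss⟩
    · exact ⟨c + d, by rw [he_def]; ring⟩
  have htor : Module.IsTorsionBy R M e := by
    intro m
    rw [he_def, mul_comm, mul_smul, hsm, smul_zero]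
  letI : Module (R ⧸ Ideal.span {e}) M := htor.module
  haveI : IsScalarTower R (R ⧸ Ideal.span {e}) M :=
    Module.IsTorsionBySet.isScalarTower _
  haveI h1 : Module.Flat (R ⧸ Ideal.span {e}) M :=
    flat_of_vnr (hspan ▸ hreg s hs) M
  haveI h2 : Module.Flat R (R ⧸ Ideal.span {e}) := flat_quot_idem he
  exact Module.Flat.trans R (R ⧸ Ideal.span {e}) M

private lemma exists_fg_lTensor {R M : Type*} [CommRing R] [AddCommGroup M] [Module R M]
    {I : Ideal R} (z : ↥I ⊗[R] M) :
    ∃ (N : Submodule R M) (_ : N.FG) (y : ↥I ⊗[R] ↥N), z = lTensor ↥I N.subtype y := by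
  induction z with
  | zero => exact ⟨⊥, Submodule.fg_bot, 0, by simp⟩
  | tmul a m =>
    exact ⟨R ∙ m, Submodule.fg_span_singleton m,
      a ⊗ₜ ⟨m, Submodule.mem_span_singleton_self m⟩, rfl⟩
  | add z₁ z₂ ih₁ ih₂ =>
    obtain ⟨N₁, hfg₁, y₁, rfl⟩ := ih₁
    obtain ⟨N₂, hfg₂, y₂, rfl⟩ := ih₂
    refine ⟨N₁ ⊔ N₂, hfg₁.sup hfg₂,
      lTensor ↥I (Submodule.inclusion (le_sup_left : N₁ ≤ N₁ ⊔ N₂)) y₁ +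
      lTensor ↥I (Submodule.inclusion (le_sup_right : N₂ ≤ N₁ ⊔ N₂)) y₂, ?_⟩
    rw [map_add, ← lTensor_comp_apply, ← lTensor_comp_apply,
      Submodule.subtype_comp_inclusion, Submodule.subtype_comp_inclusion]

private lemma flat_of_fg_flat {R : Type u} [CommRing R] (M : Type v) [AddCommGroup M]
    [Module R M] (H : ∀ N : Submodule R M, N.FG → Module.Flat R ↥N) : Module.Flat R M := by
  rw [Module.Flat.iff_rTensor_injective']
  intro I
  rw [injective_iff_map_eq_zero]
  intro z hz
  obtain ⟨N, hfg, y, rfl⟩ := exists_fg_lTensor z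
  rw [← LinearMap.comp_apply, rTensor_comp_lTensor, ← lTensor_comp_rTensor,
    LinearMap.comp_apply] at hz
  have h1 : rTensor ↥N I.subtype y = 0 :=
    Module.Flat.lTensor_preserves_injective_linearMap N.subtype N.injective_subtype hz
  have h2 : y = 0 :=
    ((Module.Flat.iff_rTensor_injective' (R := R) (M := ↥N)).mp (H N hfg) I) (by rw [h1, map_zero])
  rw [h2, map_zero]

universe u v

/-- Every S-torsion R-module is flat if and only if `R/Rs` is a von Neumann regular ring
for every `s ∈ S`. -/
theorem sTorsion_flat_iff_quotients_vonNeumannRegular (R : Type u) [CommRing R]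
    (S : Submonoid R) (hS : (0 : R) ∉ S) :
    (∀ (M : Type (max u v)) [AddCommGroup M] [Module R M],
        (∀ m : M, ∃ s ∈ S, s • m = 0) → Module.Flat R M) ↔
      (∀ s ∈ S, ∀ t : R ⧸ Ideal.span {s}, ∃ u, t = t ^ 2 * u) := by
  constructor
  · intro h s hs t
    obtain ⟨x, rfl⟩ := Ideal.Quotient.mk_surjective t
    set I := Ideal.span ({s, x} : Set R) with hIdef
    have hsI : s ∈ I := Ideal.subset_span (Set.mem_insert _ _)
    have hxI : x ∈ I := Ideal.subset_span (Set.mem_insert_of_mem _ rfl)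
    have htor : ∀ m : ULift.{v} (R ⧸ I), ∃ s' ∈ S, s' • m = 0 := by
      rintro ⟨m⟩
      obtain ⟨y, rfl⟩ := Ideal.Quotient.mk_surjective m
      refine ⟨s, hs, ?_⟩
      have : s • (Ideal.Quotient.mk I y) = Ideal.Quotient.mk I (s * y) := rfl
      simp only [ULift.ext_iff, ULift.smul_def, ULift.zero_down, this]
      exact Ideal.Quotient.eq_zero_iff_mem.mpr (I.mul_mem_right y hsI)
    haveI hflat0 : Module.Flat R (ULift.{v} (R ⧸ I)) := h _ htor
    haveI hflat : Module.Flat R (R ⧸ I) :=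
      Module.Flat.of_linearEquiv (ULift.moduleEquiv (R := R) (M := R ⧸ I)).symm
    set J := Ideal.span ({x} : Set R) with hJdef
    have hxJ : x ∈ J := Ideal.mem_span_singleton_self x
    have inj := (Module.Flat.iff_rTensor_injective' (R := R) (M := R ⧸ I)).mp hflat J
    have hx0 : x • (Ideal.Quotient.mk I 1 : R ⧸ I) = 0 := by
      have : x • (Ideal.Quotient.mk I 1 : R ⧸ I) = Ideal.Quotient.mk I (x * 1) := rfl
      rw [this, mul_one]
      exact Ideal.Quotient.eq_zero_iff_mem.mpr hxI
    have h0 : rTensor (R ⧸ I) J.subtype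
        ((⟨x, hxJ⟩ : ↥J) ⊗ₜ[R] (Ideal.Quotient.mk I 1)) = 0 := by
      rw [rTensor_tmul]
      rw [show (J.subtype ⟨x, hxJ⟩ : R) = x • (1 : R) by simp]
      rw [smul_tmul, hx0, tmul_zero]
    have h1 : (⟨x, hxJ⟩ : ↥J) ⊗ₜ[R] (Ideal.Quotient.mk I 1) = 0 :=
      inj (by rw [h0, map_zero])
    have h2 := congrArg (TensorProduct.tensorQuotEquivQuotSMul ↥J I) h1
    rw [TensorProduct.tensorQuotEquivQuotSMul_tmul_mk, LinearEquiv.map_zero] at h2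
    have h3 : (⟨x, hxJ⟩ : ↥J) ∈ I • (⊤ : Submodule R ↥J) := by
      rwa [one_smul, Submodule.Quotient.mk_eq_zero] at h2
    have h4 : x ∈ J * I := by
      rw [← mul_comm I J, ← Ideal.smul_eq_mul]
      exact (Submodule.mem_smul_top_iff I J ⟨x, hxJ⟩).mp h3
    obtain ⟨z, hzI, hzx⟩ := Ideal.mem_span_singleton_mul.mp h4
    obtain ⟨cc, dd, hcd⟩ := Ideal.mem_span_pair.mp hzI
    refine ⟨Ideal.Quotient.mk _ dd, ?_⟩
    rw [← map_pow, ← map_mul, Ideal.Quotient.mk_eq_mk_iff_sub_mem]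
    exact Ideal.mem_span_singleton'.mpr ⟨x * cc, by linear_combination hzx + x * hcd⟩
  · intro hreg M _ _ htor
    refine flat_of_fg_flat M fun N hfg => ?_
    obtain ⟨T, hT⟩ := hfg
    choose f hf1 hf2 using htor
    have hsS : (∏ t ∈ T, f t) ∈ S := Submonoid.prod_mem S fun t _ => hf1 t
    have key : ∀ n ∈ N, (∏ t ∈ T, f t) • n = 0 := by
      intro n hn
      rw [← hT] at hn
      induction hn using Submodule.span_induction with
      | mem m hm =>
        classical
        rw [← Finset.prod_erase_mul T f hm, mul_smul, hf2, smul_zero]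
      | zero => rw [smul_zero]
      | add a b _ _ ha hb => rw [smul_add, ha, hb, add_zero]
      | smul r a _ ha => rw [smul_comm, ha, smul_zero]
    refine flat_of_torsionBy S hreg hsS ↥N ?_
    rintro ⟨n, hn⟩
    exact Subtype.ext (by simpa using key n hn)
end

section
/- Suppose S consists of regular elements (non-zerodivisors) of R. Then every S-flat R-module is flat if and only if S consists of units of R. -/
universe u v

/-- If `S` consists of non-zerodivisors, then every S-flat R-module is flat
if and only if `S` consists of units. -/
theorem sFlat_implies_flat_iff_units_of_regular (R : Type u) [CommRing R]
    (S : Submonoid R) (hS : (0 : R) ∉ S)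
    (hreg : ∀ s ∈ S, ∀ r : R, s * r = 0 → r = 0) :
    (∀ (M : Type (max u v)) [AddCommGroup M] [Module R M],
        Module.Flat (Localization S) (LocalizedModule S M) → Module.Flat R M) ↔
      (∀ s ∈ S, IsUnit s) := by
  constructor
  · intro h s hs
    set I : Ideal R := Ideal.span {s} with hI
    let M := ULift.{v} (R ⧸ I)
    -- s kills every element of M
    have key : ∀ m : M, s • m = 0 := by
      rintro ⟨q⟩
      obtain ⟨r, rfl⟩ := Ideal.Quotient.mk_surjective q
      have : s • (Ideal.Quotient.mk I r) = 0 := by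
        have e : s • (Ideal.Quotient.mk I r) = Ideal.Quotient.mk I (s * r) := rfl
        rw [e, Ideal.Quotient.eq_zero_iff_mem, hI, Ideal.mem_span_singleton]
        exact ⟨r, rfl⟩
      exact ULift.ext _ _ this
    -- the localization of M is trivial
    haveI hsub : Subsingleton (LocalizedModule S M) := by
      refine ⟨fun x y => ?_⟩
      induction x using LocalizedModule.induction_on with
      | h m t =>
        induction y using LocalizedModule.induction_on with
        | h m' t' =>
          rw [LocalizedModule.mk_eq]
          refine ⟨⟨s, hs⟩, ?_⟩
          have h1 : (⟨s, hs⟩ : S) • t' • m = 0 := by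
            show s • t' • m = 0
            rw [smul_comm, key, smul_zero]
          have h2 : (⟨s, hs⟩ : S) • t • m' = 0 := by
            show s • t • m' = 0
            rw [smul_comm, key, smul_zero]
          rw [h1, h2]
    haveI : Module.Free (Localization S) (LocalizedModule S M) :=
      Module.Free.of_subsingleton _ _
    have hflatM : Module.Flat R M := h M Module.Flat.of_free
    -- flatness forces M = 0
    have hf : Function.Injective (LinearMap.lsmul R R s) := by
      intro a b hab
      have : s * (a - b) = 0 := by
        simp only [LinearMap.lsmul_apply, smul_eq_mul] at hab
        rw [mul_sub, hab, sub_self]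
      exact sub_eq_zero.mp (hreg s hs _ this)
    have hinj := Module.Flat.lTensor_preserves_injective_linearMap
      (M := M) (LinearMap.lsmul R R s) hf
    haveI : Subsingleton M := by
      refine ⟨fun m m' => ?_⟩
      have e1 : (LinearMap.lTensor M (LinearMap.lsmul R R s)) (m ⊗ₜ[R] (1 : R))
          = (LinearMap.lTensor M (LinearMap.lsmul R R s)) (m' ⊗ₜ[R] (1 : R)) := by
        simp only [LinearMap.lTensor_tmul, LinearMap.lsmul_apply, smul_eq_mul, mul_one]
        rw [show m ⊗ₜ[R] s = s • (m ⊗ₜ[R] (1:R)) by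
              rw [← TensorProduct.tmul_smul, smul_eq_mul, mul_one],
            show m' ⊗ₜ[R] s = s • (m' ⊗ₜ[R] (1:R)) by
              rw [← TensorProduct.tmul_smul, smul_eq_mul, mul_one],
            TensorProduct.smul_tmul', TensorProduct.smul_tmul', key, key]
      have e2 := hinj e1
      have := congrArg (TensorProduct.rid R M) e2
      simpa using this
    haveI : Subsingleton (R ⧸ I) :=
      (Equiv.ulift (α := R ⧸ I)).symm.subsingleton
    have : I = ⊤ := Ideal.Quotient.subsingleton_iff.mp inferInstance
    rw [hI] at this
    exact Ideal.span_singleton_eq_top.mp this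
  · intro hu M _ _ hflat
    haveI := hflat
    haveI : Module.Flat R (LocalizedModule S M) :=
      Module.Flat.trans R (Localization S) (LocalizedModule S M)
    have hbij : Function.Bijective (LocalizedModule.mkLinearMap S M) := by
      constructor
      · intro m m' hmm'
        have := (LocalizedModule.mk_eq).mp hmm'
        obtain ⟨u, hu'⟩ := this
        simp only [one_smul] at hu'
        exact ((hu u u.2).smul_left_cancel).mp hu'
      · intro x
        induction x using LocalizedModule.induction_on with
        | h m t =>
          obtain ⟨ut, hut⟩ := hu t t.2
          refine ⟨((↑ut⁻¹ : Rˣ) : R) • m, ?_⟩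
          show LocalizedModule.mk (((↑ut⁻¹ : Rˣ) : R) • m) 1 = LocalizedModule.mk m t
          rw [LocalizedModule.mk_eq]
          refine ⟨1, ?_⟩
          simp only [one_smul]
          rw [Submonoid.smul_def, ← hut, ← mul_smul, Units.mul_inv, one_smul]
    exact Module.Flat.of_linearEquiv
      (LinearEquiv.ofBijective (LocalizedModule.mkLinearMap S M) hbij)
end

section
/- R is S-perfect if and only if R is perfect and R/Rs is a semisimple ring for every s ∈ S. -/
universe u v

open TensorProduct LinearMap Function Submodule Finsupp

section Helpers

universe u₁ u₂ u₃ u₄ w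

section Vanishing

variable {A : Type u₁} [CommRing A] {P : Type u₂} [AddCommGroup P] [Module A P]
  {N : Type u₃} [AddCommGroup N] [Module A N]
  {ι : Type u₄} [Fintype ι]

theorem myVanishesTrivially {m : ι → P} {n : ι → N}
    (hm : Submodule.span A (Set.range m) = ⊤)
    (hmn : ∑ i, m i ⊗ₜ n i = (0 : P ⊗[A] N)) :
    ∃ (κ : Type (max u₁ u₃ u₄)) (_ : Fintype κ) (a : ι → κ → A) (y : κ → N),
      (∀ i, n i = ∑ j, a i j • y j) ∧ ∀ j, ∑ i, a i j • m i = 0 := by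
  set G : (ι →₀ A) →ₗ[A] P := Finsupp.linearCombination A m with hG
  have G_basis_eq (i : ι) : G (Finsupp.single i 1) = m i := by simp [hG]
  have G_surjective : Surjective G := by
    apply LinearMap.range_eq_top.mp
    apply top_le_iff.mp
    rw [← hm]
    apply Submodule.span_le.mpr
    rintro _ ⟨i, rfl⟩
    use Finsupp.single i 1, G_basis_eq i
  set en : (ι →₀ A) ⊗[A] N := ∑ i, Finsupp.single i 1 ⊗ₜ n i with hen
  have en_mem_ker : en ∈ ker (rTensor N G) := by simp [hen, G_basis_eq, hmn]
  have exact_ker_subtype : Exact (ker G).subtype G := G.exact_subtype_ker_map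
  have exact_rTensor_ker_subtype : Exact (rTensor N (ker G).subtype) (rTensor N G) :=
    rTensor_exact (M := ↥(ker G)) N exact_ker_subtype G_surjective
  have en_mem_range : en ∈ range (rTensor N (ker G).subtype) :=
    exact_rTensor_ker_subtype.linearMap_ker_eq ▸ en_mem_ker
  obtain ⟨kn, hkn⟩ := en_mem_range
  obtain ⟨ma, rfl : kn = ∑ kj ∈ ma, kj.1 ⊗ₜ[A] kj.2⟩ := exists_finset kn
  use ↑↑ma, FinsetCoe.fintype ma
  use fun i ⟨⟨kj, _⟩, _⟩ ↦ (kj : ι →₀ A) i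
  use fun ⟨⟨_, yj⟩, _⟩ ↦ yj
  constructor
  · intro i
    classical
    apply_fun finsuppScalarLeft A N ι at hkn
    apply_fun (· i) at hkn
    symm at hkn
    simp only [map_sum, finsuppScalarLeft_apply_tmul, zero_smul, Finsupp.single_zero,
      Finsupp.sum_single_index, one_smul, Finsupp.finset_sum_apply, Finsupp.single_apply,
      Finset.sum_ite_eq', Finset.mem_univ, ↓reduceIte, rTensor_tmul, coe_subtype, Finsupp.sum_apply,
      Finsupp.sum_ite_eq', Finsupp.mem_support_iff, ne_eq, ite_not, en] at hkn
    simp only [Finset.univ_eq_attach, Finset.sum_attach ma (fun x ↦ (x.1 : ι →₀ A) i • x.2)]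
    convert hkn using 2 with x _
    split
    · next h'x => rw [h'x, zero_smul]
    · rfl
  · rintro ⟨⟨⟨k, hk⟩, _⟩, _⟩
    simpa only [hG, linearCombination_apply, zero_smul, implies_true, Finsupp.sum_fintype] using
      mem_ker.mp hk

end Vanishing

variable {A : Type u₁} [CommRing A]
  {N : Type u₃} [AddCommGroup N] [Module A N]
  {ι : Type u₄} [Fintype ι]


theorem myExtract [Module.Flat A N] (f : ι → A) (q : ι → N)
    (h : ∑ i, f i • q i = 0) :
    ∃ (k : ℕ) (b : ι → Fin k → A) (y : Fin k → N),
      (∀ i, q i = ∑ j, b i j • y j) ∧ ∀ j, ∑ i, f i * b i j = 0 := by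
  set I : Ideal A := Ideal.span (Set.range f) with hI
  set m : ι → I := fun i => ⟨f i, Submodule.subset_span ⟨i, rfl⟩⟩ with hm
  have hspan : Submodule.span A (Set.range m) = ⊤ := by
    apply Submodule.map_injective_of_injective I.injective_subtype
    rw [Submodule.map_span, Submodule.map_subtype_top]
    rw [← Set.range_comp]
    exact congrArg (Submodule.span A) (by ext x; simp [hm]) |>.trans rfl
  have hx : (∑ i, m i ⊗ₜ q i : I ⊗[A] N) = 0 := by
    apply (Module.Flat.iff_rTensor_injective' (R := A) (M := N)).mp ‹_› I
    rw [map_zero, map_sum]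
    apply (TensorProduct.lid A N).injective
    rw [map_zero, map_sum]
    simpa using h
  obtain ⟨κ, hκ, a, y, h1, h2⟩ := myVanishesTrivially hspan hx
  refine ⟨Fintype.card κ, fun i j => a i ((Fintype.equivFin κ).symm j),
    fun j => y ((Fintype.equivFin κ).symm j), fun i => ?_, fun j => ?_⟩
  · rw [h1 i]
    exact (Equiv.sum_comp (Fintype.equivFin κ).symm (fun j => a i j • y j)).symm
  · have := h2 ((Fintype.equivFin κ).symm j)
    have := congrArg (Subtype.val) this
    push_cast at this
    simpa [mul_comm] using this

theorem myClear {R : Type u} [CommRing R] (S : Submonoid R) {M : Type w}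
    [AddCommGroup M] [Module R M]
    [Module.Flat (Localization S) (LocalizedModule S M)]
    {ι : Type u₄} [Fintype ι] (a : ι → R) (x : ι → M) (h : ∑ i, a i • x i = 0) :
    ∃ s ∈ S, ∃ (k : ℕ) (B : ι → Fin k → R) (y : Fin k → M),
      (∀ i, s • x i = ∑ j, B i j • y j) ∧ ∀ j, ∑ i, a i * B i j = 0 := by
  classical
  set A := Localization S with hA
  set φ := LocalizedModule.mkLinearMap S M with hφ
  have hrel : ∑ i, (algebraMap R A (a i)) • (φ (x i)) = 0 := by
    simp_rw [algebraMap_smul, ← map_smul, ← map_sum, h, map_zero]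
  obtain ⟨k, b, y', hq, hb⟩ := myExtract (fun i => algebraMap R A (a i)) (fun i => φ (x i)) hrel
  obtain ⟨c, hc⟩ := IsLocalization.exist_integer_multiples_of_finite S
    (fun p : ι × Fin k => b p.1 p.2)
  choose B₀ hB₀ using hc
  have hy : ∀ j, ∃ p : M × S, LocalizedModule.mk p.1 p.2 = y' j := fun j =>
    LocalizedModule.induction_on (fun m s => ⟨(m, s), rfl⟩) (y' j)
  choose p hp using hy
  set z : Fin k → M := fun j => (p j).1 with hz
  set w : Fin k → S := fun j => (p j).2 with hw
  set W : S := ∏ j, w j with hW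
  set Y : Fin k → M := fun j => (∏ j' ∈ Finset.univ.erase j, ((w j' : R))) • z j with hY
  have key1 : ∀ j, ((W : R)) • y' j = φ (Y j) := by
    intro j
    rw [← hp j]
    show (W : R) • LocalizedModule.mk (z j) (w j) = _
    rw [LocalizedModule.smul'_mk]
    have hWj : (W : R) • z j = (w j) • (Y j) := by
      rw [Submonoid.smul_def, hY, smul_smul, hW]
      push_cast
      rw [← Finset.mul_prod_erase Finset.univ (fun j' => ((w j' : R))) (Finset.mem_univ j)]
    rw [hWj]
    exact LocalizedModule.mk_cancel (w j) (Y j)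
  have keyeq : ∀ i, φ (((c : R) * (W : R)) • x i) = φ (∑ j, B₀ (i, j) • Y j) := by
    intro i
    have hsc : ∀ j : Fin k, ((c : R) * (W : R)) • (b i j • y' j)
        = B₀ (i, j) • ((W : R) • y' j) := by
      intro j
      rw [← algebraMap_smul A ((c : R) * (W : R)) (b i j • y' j),
        ← algebraMap_smul A (B₀ (i, j)) ((W : R) • y' j),
        ← algebraMap_smul A (W : R) (y' j), smul_smul, smul_smul, map_mul]
      congr 1
      rw [hB₀ (i, j), Algebra.smul_def]
      ring
    rw [map_smul, map_sum]
    calc ((c : R) * (W : R)) • φ (x i)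
        = ((c : R) * (W : R)) • ∑ j, b i j • y' j := by rw [hq i]
      _ = ∑ j, B₀ (i, j) • ((W : R) • y' j) := by
          rw [Finset.smul_sum]; exact Finset.sum_congr rfl fun j _ => hsc j
      _ = ∑ j, φ (B₀ (i, j) • Y j) := by simp_rw [key1, map_smul]
  have hmk : ∀ i, ∃ u : S, u • ((1 : S) • (((c : R) * (W : R)) • x i))
      = u • ((1 : S) • (∑ j, B₀ (i, j) • Y j)) := by
    intro i
    exact LocalizedModule.mk_eq.mp (keyeq i)
  choose u hu using hmk
  set U : S := ∏ i, u i with hU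
  have hUkey : ∀ i, (U : R) • (((c : R) * (W : R)) • x i)
      = (U : R) • (∑ j, B₀ (i, j) • Y j) := by
    intro i
    have h1 := hu i
    simp only [one_smul, Submonoid.smul_def] at h1
    have : (U : R) = (∏ i' ∈ Finset.univ.erase i, ((u i' : R))) * (u i : R) := by
      rw [hU]; push_cast
      rw [Finset.prod_erase_mul Finset.univ (fun i' => ((u i' : R))) (Finset.mem_univ i)]
    calc (U : R) • (((c : R) * (W : R)) • x i)
        = (∏ i' ∈ Finset.univ.erase i, ((u i' : R))) • ((u i : R) • (((c : R) * (W : R)) • x i)) := by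
          rw [this, mul_smul]
      _ = (∏ i' ∈ Finset.univ.erase i, ((u i' : R))) • ((u i : R) • ∑ j, B₀ (i, j) • Y j) := by
          rw [h1]
      _ = (U : R) • (∑ j, B₀ (i, j) • Y j) := by rw [this, mul_smul]
  have hbj : ∀ j, ∃ t : S, (t : R) * (∑ i, a i * B₀ (i, j)) = 0 := by
    intro j
    have h0 : algebraMap R A (∑ i, a i * B₀ (i, j)) = 0 := by
      rw [map_sum]
      have : ∀ i ∈ Finset.univ, algebraMap R A (a i * B₀ (i, j))
          = algebraMap R A (c : R) * (algebraMap R A (a i) * b i j) := by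
        intro i _
        rw [map_mul, hB₀ (i, j), Algebra.smul_def]
        ring
      rw [Finset.sum_congr rfl this, ← Finset.mul_sum, hb j, mul_zero]
    obtain ⟨m, hm⟩ := (IsLocalization.map_eq_zero_iff S A _).mp h0
    exact ⟨m, hm⟩
  choose t ht using hbj
  set T : S := ∏ j, t j with hT
  have hTkey : ∀ j, (T : R) * (∑ i, a i * B₀ (i, j)) = 0 := by
    intro j
    have : (T : R) = (∏ j' ∈ Finset.univ.erase j, ((t j' : R))) * (t j : R) := by
      rw [hT]; push_cast
      rw [Finset.prod_erase_mul Finset.univ (fun j' => ((t j' : R))) (Finset.mem_univ j)]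
    rw [this, mul_assoc, ht j, mul_zero]
  refine ⟨((T * U * c * W : S) : R), (T * U * c * W : S).2, k,
    fun i j => (T : R) * (U : R) * B₀ (i, j), Y, fun i => ?_, fun j => ?_⟩
  · push_cast
    calc ((T : R) * (U : R) * (c : R) * (W : R)) • x i
        = ((T : R) * (U : R)) • (((c : R) * (W : R)) • x i) := by
          rw [smul_smul]; ring_nf
      _ = (T : R) • ((U : R) • ∑ j, B₀ (i, j) • Y j) := by
          rw [mul_smul, hUkey i]
      _ = ∑ j, ((T : R) * (U : R) * B₀ (i, j)) • Y j := by
          rw [Finset.smul_sum, Finset.smul_sum]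
          exact Finset.sum_congr rfl fun j _ => by rw [smul_smul, smul_smul, mul_assoc]
  · calc ∑ i, a i * ((T : R) * (U : R) * B₀ (i, j))
        = (U : R) * ((T : R) * ∑ i, a i * B₀ (i, j)) := by
          rw [Finset.mul_sum, Finset.mul_sum]
          exact Finset.sum_congr rfl fun i _ => by ring
      _ = 0 := by rw [hTkey j, mul_zero]

theorem myProjOfSemisimple (A : Type*) [Ring A] [IsSemisimpleRing A]
    (P : Type*) [AddCommGroup P] [Module A P] : Module.Projective A P := by
  classical
  set F := P →₀ A
  set f : F →ₗ[A] P := Finsupp.linearCombination A (id : P → P) with hf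
  have hfs : Surjective f := fun q => ⟨Finsupp.single q 1, by
    rw [hf, Finsupp.linearCombination_single, one_smul]; rfl⟩
  obtain ⟨C, hC⟩ := exists_isCompl (LinearMap.ker f)
  have hinj : Injective (f.comp C.subtype) := by
    intro v v' hvv'
    have h1 : (v : F) - (v' : F) ∈ LinearMap.ker f := by
      rw [LinearMap.mem_ker, map_sub, sub_eq_zero]
      exact hvv'
    have h2 : (v : F) - (v' : F) ∈ C := sub_mem v.2 v'.2
    have h3 : (v : F) - (v' : F) = 0 := by
      have := hC.disjoint.le_bot ⟨h1, h2⟩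
      simpa using this
    exact Subtype.ext (sub_eq_zero.mp h3)
  have hsurj : Surjective (f.comp C.subtype) := by
    intro q
    obtain ⟨v, rfl⟩ := hfs q
    have : v ∈ (LinearMap.ker f) ⊔ C := by rw [hC.sup_eq_top]; trivial
    obtain ⟨n, hn, c, hc, rfl⟩ := Submodule.mem_sup.mp this
    exact ⟨⟨c, hc⟩, by simp [LinearMap.mem_ker.mp hn]⟩
  set g : C ≃ₗ[A] P := LinearEquiv.ofBijective (f.comp C.subtype) ⟨hinj, hsurj⟩ with hg
  refine Module.Projective.of_split (C.subtype.comp g.symm.toLinearMap) f ?_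
  ext q
  have : f (C.subtype (g.symm q)) = (f.comp C.subtype) (g.symm q) := rfl
  simp only [LinearMap.comp_apply, LinearMap.id_apply, this]
  exact g.apply_symm_apply q

theorem myVnrElem {R : Type*} [CommRing R] (s : R)
    (hs : IsSemisimpleRing (R ⧸ Ideal.span {s * s})) : ∃ u : R, s = s * s * u := by
  set A := R ⧸ Ideal.span {s * s} with hA
  set π : R →+* A := Ideal.Quotient.mk _ with hπ
  obtain ⟨C, hC⟩ := exists_isCompl (Ideal.span {π s} : Submodule A A)
  have h1 : (1 : A) ∈ (Ideal.span {π s} : Submodule A A) ⊔ C := by rw [hC.sup_eq_top]; trivial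
  obtain ⟨y, hy, c, hc, h1⟩ := Submodule.mem_sup.mp h1
  have hsy : π s = π s * y := by
    have h2 : π s * c = π s - π s * y := by
      linear_combination (π s) * h1
    have hmem1 : π s * c ∈ (Ideal.span {π s} : Submodule A A) := by
      rw [h2]
      refine sub_mem (Ideal.mem_span_singleton_self _) ?_
      exact Ideal.mul_mem_right _ _ (Ideal.mem_span_singleton_self _)
    have hmem2 : π s * c ∈ C := Submodule.smul_mem _ (π s) hc
    have : π s * c = 0 := by
      have := hC.disjoint.le_bot ⟨hmem1, hmem2⟩
      simpa using this
    rw [h2] at this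
    linear_combination this
  obtain ⟨t, ht⟩ := Ideal.mem_span_singleton'.mp hy
  obtain ⟨t', rfl⟩ := Ideal.Quotient.mk_surjective t
  have : π s = π (s * s * t') := by
    rw [map_mul, map_mul]
    calc π s = π s * y := hsy
      _ = π s * (π t' * π s) := by rw [← ht]
      _ = π s * π s * π t' := by ring
  have hmem : s - s * s * t' ∈ Ideal.span {s * s} := by
    rw [← Ideal.Quotient.eq_zero_iff_mem, map_sub, sub_eq_zero]
    exact this
  obtain ⟨r, hr⟩ := Ideal.mem_span_singleton'.mp hmem
  exact ⟨t' + r, by linear_combination -hr⟩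

theorem myFlatQuotIdem {R : Type*} [CommRing R] (e : R) (he : e * e = e) :
    Module.Flat R (R ⧸ Ideal.span {e}) := by
  set I : Ideal R := Ideal.span {e} with hI
  have hker : I ≤ LinearMap.ker (LinearMap.toSpanSingleton R R (1 - e)) := by
    rw [hI, Ideal.span_le]
    rintro x rfl
    simp only [SetLike.mem_coe, LinearMap.mem_ker, LinearMap.toSpanSingleton_apply]
    rw [smul_eq_mul]
    linear_combination -he
  set g : (R ⧸ I) →ₗ[R] R := Submodule.liftQ I (LinearMap.toSpanSingleton R R (1 - e)) hker with hg
  refine Module.Flat.of_retract g I.mkQ ?_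
  apply Submodule.linearMap_qext
  refine LinearMap.ext fun r => ?_
  simp only [LinearMap.comp_apply, Submodule.mkQ_apply, LinearMap.id_comp, hg,
    Submodule.liftQ_apply, LinearMap.toSpanSingleton_apply, LinearMap.id_apply]
  rw [Submodule.Quotient.eq]
  have : r - r • (1 - e) = r * e := by rw [smul_eq_mul]; ring
  rw [show r • (1 - e) - r = -(r * e) by rw [smul_eq_mul]; ring]
  exact neg_mem (Ideal.mul_mem_left _ _ (Ideal.mem_span_singleton_self e))

theorem myFlatTorsion {R : Type*} [CommRing R] (e : R) (he : e * e = e)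
    (hsem : IsSemisimpleRing (R ⧸ Ideal.span {e}))
    (P : Type*) [AddCommGroup P] [Module R P] (hP : ∀ p : P, e • p = 0) :
    Module.Flat R P := by
  have tor : Module.IsTorsionBySet R P (Ideal.span {e} : Ideal R) := by
    intro x a
    obtain ⟨r, hr⟩ := Ideal.mem_span_singleton'.mp a.2
    show (a : R) • x = 0
    rw [← hr, mul_smul, hP x, smul_zero]
  letI : Module (R ⧸ Ideal.span {e}) P := tor.module
  haveI : IsScalarTower R (R ⧸ Ideal.span {e}) P := tor.isScalarTower
  haveI : Module.Projective (R ⧸ Ideal.span {e}) P := myProjOfSemisimple _ _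
  haveI : Module.Flat (R ⧸ Ideal.span {e}) P := Module.Flat.of_projective
  haveI : Module.Flat R (R ⧸ Ideal.span {e}) := myFlatQuotIdem e he
  exact Module.Flat.trans R (R ⧸ Ideal.span {e}) P

theorem myFlatOfSFlat {R : Type u} [CommRing R] (S : Submonoid R) {M : Type w}
    [AddCommGroup M] [Module R M]
    [Module.Flat (Localization S) (LocalizedModule S M)]
    (hsem : ∀ s ∈ S, IsSemisimpleRing (R ⧸ Ideal.span {s})) : Module.Flat R M := by
  classical
  rw [Module.Flat.iff_rTensor_injective']
  intro I
  rw [injective_iff_map_eq_zero]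
  intro x hx
  obtain ⟨t, rfl⟩ := TensorProduct.exists_finset x
  set ι := {p : ↥I × M // p ∈ t} with hι
  set mI : ι → I := fun i => i.1.1 with hmI
  set a : ι → R := fun i => ((i.1.1 : R)) with ha
  set n : ι → M := fun i => i.1.2 with hn
  have hsum : ∀ (f : ↥I × M → I ⊗[R] M), ∑ p ∈ t, f p = ∑ i : ι, f i.1 :=
    fun f => (Finset.sum_attach t f).symm
  have h1 : (∑ p ∈ t, (((p.1 : R)) ⊗ₜ[R] p.2 : R ⊗[R] M)) = 0 := by
    rw [map_sum] at hx
    simpa using hx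
  have h0 : ∑ i : ι, a i • n i = 0 := by
    have h2 := congrArg (TensorProduct.lid R M) h1
    rw [map_sum, map_zero] at h2
    simp only [lid_tmul] at h2
    rw [← h2]
    exact (Finset.sum_attach t (fun p => ((p.1 : R)) • p.2)).symm ▸ rfl
  obtain ⟨s, hsS, k, B, y, hmod, hring⟩ := myClear S a n h0
  obtain ⟨u, hu⟩ := myVnrElem s (hsem (s * s) (mul_mem hsS hsS))
  set e := s * u with he
  have hee : e * e = e := by rw [he]; linear_combination (-u) * hu
  have hspan : Ideal.span {e} = Ideal.span {s} := by
    apply le_antisymm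
    · rw [Ideal.span_le]
      rintro x rfl
      exact SetLike.mem_coe.mpr (Ideal.mem_span_singleton.mpr ⟨u, rfl⟩)
    · rw [Ideal.span_le]
      rintro x rfl
      refine SetLike.mem_coe.mpr (Ideal.mem_span_singleton.mpr ⟨x, ?_⟩)
      linear_combination hu
  have hsemE : IsSemisimpleRing (R ⧸ Ideal.span {e}) := hspan ▸ hsem s hsS
  set N : Submodule R M := LinearMap.range (LinearMap.lsmul R M (1 - e)) with hN
  have hNkill : ∀ p : N, e • p = 0 := by
    rintro ⟨_, ⟨m, rfl⟩⟩
    refine Subtype.ext ?_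
    show e • ((1 - e) • m) = 0
    rw [smul_smul, show e * (1 - e) = 0 by linear_combination -hee, zero_smul]
  haveI : Module.Flat R N := myFlatTorsion e hee hsemE N hNkill
  -- decompose
  have hxsplit : ∑ p ∈ t, (p.1 ⊗ₜ[R] p.2 : I ⊗[R] M)
      = (∑ i : ι, mI i ⊗ₜ[R] (e • n i)) + ∑ i : ι, mI i ⊗ₜ[R] ((1 - e) • n i) := by
    rw [hsum (fun p => p.1 ⊗ₜ[R] p.2), ← Finset.sum_add_distrib]
    refine Finset.sum_congr rfl fun i _ => ?_
    rw [← tmul_add, ← add_smul, show e + (1 - e) = 1 by ring, one_smul]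
  have hpart1 : (∑ i : ι, mI i ⊗ₜ[R] (e • n i)) = 0 := by
    have hcoef : ∀ j, (∑ i : ι, (u * B i j) • mI i) = 0 := by
      intro j
      refine Subtype.ext ?_
      push_cast
      show (∑ i : ι, (u * B i j) * a i) = 0
      calc ∑ i : ι, (u * B i j) * a i = u * ∑ i : ι, a i * B i j := by
            rw [Finset.mul_sum]; exact Finset.sum_congr rfl fun i _ => by ring
        _ = 0 := by rw [hring j, mul_zero]
    calc ∑ i : ι, mI i ⊗ₜ[R] (e • n i)
        = ∑ i : ι, mI i ⊗ₜ[R] (∑ j, (u * B i j) • y j) := by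
          refine Finset.sum_congr rfl fun i _ => ?_
          congr 1
          rw [he, mul_comm s u, mul_smul, hmod i, Finset.smul_sum]
          exact Finset.sum_congr rfl fun j _ => by rw [smul_smul]
      _ = ∑ j, (∑ i : ι, (u * B i j) • mI i) ⊗ₜ[R] y j := by
          simp_rw [tmul_sum]
          rw [Finset.sum_comm]
          refine Finset.sum_congr rfl fun j _ => ?_
          rw [sum_tmul]
          exact Finset.sum_congr rfl fun i _ => by rw [smul_tmul]
      _ = 0 := by simp_rw [hcoef, zero_tmul]; exact Finset.sum_const_zero
  have hpart2 : (∑ i : ι, mI i ⊗ₜ[R] ((1 - e) • n i)) = 0 := by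
    set nN : ι → N := fun i => ⟨(1 - e) • n i, ⟨n i, rfl⟩⟩ with hnN
    set z : I ⊗[R] N := ∑ i : ι, mI i ⊗ₜ[R] nN i with hz
    have hz0 : z = 0 := by
      apply (Module.Flat.iff_rTensor_injective' (R := R) (M := N)).mp ‹Module.Flat R N› I
      rw [map_zero, hz, map_sum]
      apply (TensorProduct.lid R N).injective
      rw [map_sum, map_zero]
      simp only [rTensor_tmul, coe_subtype, lid_tmul]
      refine Subtype.ext ?_
      push_cast
      show (∑ i : ι, a i • ((1 - e) • n i)) = 0
      calc ∑ i : ι, a i • ((1 - e) • n i) = (1 - e) • ∑ i : ι, a i • n i := by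
            rw [Finset.smul_sum]
            exact Finset.sum_congr rfl fun i _ => by rw [smul_comm]
        _ = 0 := by rw [h0, smul_zero]
    have : (∑ i : ι, mI i ⊗ₜ[R] ((1 - e) • n i)) = (LinearMap.lTensor ↥I N.subtype) z := by
      rw [hz, map_sum]
      exact Finset.sum_congr rfl fun i _ => by rw [lTensor_tmul]; rfl
    rw [this, hz0, map_zero]
  rw [hxsplit, hpart1, hpart2, add_zero]

theorem mySemisimpleQuot {R : Type u} [CommRing R] (S : Submonoid R)
    (H : ∀ (M : Type (max u v)) [AddCommGroup M] [Module R M],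
        Module.Flat (Localization S) (LocalizedModule S M) → Module.Projective R M)
    (s : R) (hsS : s ∈ S) : IsSemisimpleRing (R ⧸ Ideal.span {s}) := by
  classical
  set R' := R ⧸ Ideal.span {s} with hR'
  have hs0 : (Ideal.Quotient.mk (Ideal.span {s}) s) = 0 :=
    Ideal.Quotient.eq_zero_iff_mem.mpr (Ideal.mem_span_singleton_self s)
  refine (isSemisimpleModule_iff _ _).mpr ⟨?_⟩
  intro N
  set Q := R' ⧸ N with hQ
  -- s kills Q
  have hkillQ : ∀ q : Q, s • q = 0 := by
    intro q
    have : s • q = (Ideal.Quotient.mk (Ideal.span {s}) s) • q := by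
      rw [← Ideal.Quotient.algebraMap_eq, algebraMap_smul]
    rw [this, hs0, zero_smul]
  have hkill : ∀ q : ULift.{v} Q, s • q = 0 := by
    intro q
    have : (s • q).down = s • q.down := rfl
    apply ULift.ext
    rw [this, hkillQ]
    rfl
  haveI : Subsingleton (LocalizedModule S (ULift.{v} Q)) := by
    have hz : ∀ z : LocalizedModule S (ULift.{v} Q), z = 0 := by
      intro z
      induction z using LocalizedModule.induction_on with
      | h m t =>
        rw [← LocalizedModule.zero_mk t, LocalizedModule.mk_eq]
        refine ⟨⟨s, hsS⟩, ?_⟩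
        rw [smul_zero, smul_zero, Submonoid.smul_def, Submonoid.smul_def, smul_comm, hkill,
          smul_zero]
    exact ⟨fun a b => by rw [hz a, hz b]⟩
  haveI hfree : Module.Free (Localization S) (LocalizedModule S (ULift.{v} Q)) :=
    Module.Free.of_subsingleton _ _
  haveI hflat : Module.Flat (Localization S) (LocalizedModule S (ULift.{v} Q)) :=
    Module.Flat.of_projective
  haveI hproj : Module.Projective R (ULift.{v} Q) := H _ hflat
  -- build a section of N.mkQ
  have hsurj : Surjective ((N.mkQ).restrictScalars R) := Submodule.mkQ_surjective N
  obtain ⟨h, hh⟩ := Module.projective_lifting_property ((N.mkQ).restrictScalars R)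
    (ULift.moduleEquiv : ULift.{v} Q ≃ₗ[R] Q).toLinearMap hsurj
  set σ₀ : Q →ₗ[R] R' := h.comp (ULift.moduleEquiv : ULift.{v} Q ≃ₗ[R] Q).symm.toLinearMap
    with hσ₀
  have hsec : ∀ q : Q, N.mkQ (σ₀ q) = q := by
    intro q
    have := congrArg (fun f => f ((ULift.moduleEquiv : ULift.{v} Q ≃ₗ[R] Q).symm q)) hh
    simpa [hσ₀] using this
  set σ : Q →ₗ[R'] R' :=
    { toFun := σ₀
      map_add' := map_add σ₀
      map_smul' := by
        intro r' q
        obtain ⟨r, rfl⟩ := Ideal.Quotient.mk_surjective r'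
        show σ₀ ((Ideal.Quotient.mk (Ideal.span {s}) r) • q)
            = (Ideal.Quotient.mk (Ideal.span {s}) r) • σ₀ q
        rw [← Ideal.Quotient.algebraMap_eq, algebraMap_smul R' r q, map_smul,
          algebraMap_smul] } with hσ
  have hsec' : ∀ q : Q, N.mkQ (σ q) = q := hsec
  refine ⟨LinearMap.range σ, ?_⟩
  constructor
  · rw [Submodule.disjoint_def]
    rintro x hxN ⟨q, rfl⟩
    have : q = 0 := by
      rw [← hsec' q]
      exact (Submodule.Quotient.mk_eq_zero N).mpr hxN
    rw [this, map_zero]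
  · rw [codisjoint_iff, eq_top_iff]
    intro x _
    rw [Submodule.mem_sup]
    refine ⟨x - σ (N.mkQ x), ?_, σ (N.mkQ x), ⟨N.mkQ x, rfl⟩, by ring⟩
    rw [← Submodule.Quotient.mk_eq_zero N]
    show N.mkQ _ = 0
    rw [map_sub, hsec', sub_self]

end Helpers

/-- `R` is `S`-perfect if and only if `R` is perfect and `R/Rs` is a semisimple ring
for every `s ∈ S`. -/
theorem sPerfect_iff_perfect_and_quotients_semisimple (R : Type u) [CommRing R]
    (S : Submonoid R) (hS : (0 : R) ∉ S) :
    (∀ (M : Type (max u v)) [AddCommGroup M] [Module R M],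
        Module.Flat (Localization S) (LocalizedModule S M) → Module.Projective R M) ↔
      ((∀ (M : Type (max u v)) [AddCommGroup M] [Module R M],
          Module.Flat R M → Module.Projective R M) ∧
        ∀ s ∈ S, IsSemisimpleRing (R ⧸ Ideal.span {s})) := by
  constructor
  · intro H
    refine ⟨fun M _ _ hflat => ?_, fun s hs => mySemisimpleQuot S H s hs⟩
    haveI := hflat
    exact H M inferInstance
  · rintro ⟨h1, h2⟩ M _ _ hSflat
    haveI := hSflat
    exact h1 M (myFlatOfSFlat S h2)
end

section
/- Let S be a multiplicative subset of R and M an R-module such that R is S-perfect and M is S-divisible (sM = M for all s ∈ S). If s ∈ S, r ∈ J(R), and m ∈ M, then in the trivial extension R ⋉ M there exists (r', m') ∈ J(R) ⋉ M with (r, m) = (s, n)·(r', m') for any n ∈ M; in particular J(R ⋉ M) = J(R) ⋉ M is (S ⋉ 0)-divisible. -/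
universe u

open TrivSqZeroExt

/-- If some `s ∈ S` kills `N`, then the localization of `N` at `S` is trivial. -/
lemma aux_subsingleton_localizedModule {R : Type u} [CommRing R] (S : Submonoid R)
    (N : Type u) [AddCommGroup N] [Module R N] (s : R) (hs : s ∈ S)
    (h : ∀ x : N, s • x = 0) : Subsingleton (LocalizedModule S N) := by
  refine ⟨fun a b => ?_⟩
  induction a using LocalizedModule.induction_on with
  | h x t =>
    induction b using LocalizedModule.induction_on with
    | h y u =>
      rw [LocalizedModule.mk_eq]
      exact ⟨⟨s, hs⟩, by simp [h, smul_comm]⟩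

/-- If `R ⧸ I` is a projective `R`-module, the quotient map splits, giving an element `f`
with `1 - f ∈ I` and `I * f = 0`. -/
lemma aux_split {R : Type u} [CommRing R] (I : Ideal R)
    (hproj : Module.Projective R (R ⧸ I)) : ∃ f : R, (1 - f) ∈ I ∧ ∀ x ∈ I, x * f = 0 := by
  obtain ⟨σ, hσ⟩ := Module.projective_lifting_property I.mkQ (LinearMap.id)
    (Submodule.mkQ_surjective I)
  refine ⟨σ (I.mkQ 1), ?_, ?_⟩
  · rw [← Submodule.Quotient.mk_eq_zero, Submodule.Quotient.mk_sub]
    have : I.mkQ (σ (I.mkQ 1)) = I.mkQ 1 := congrArg (· (I.mkQ 1)) hσ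
    simpa [Submodule.Quotient.mk''_eq_mk] using sub_eq_zero.mpr this.symm
  · intro x hx
    have h1 : I.mkQ x = x • I.mkQ 1 := by rw [← map_smul, smul_eq_mul, mul_one]
    have h2 : I.mkQ x = 0 := by
      simpa using Ideal.Quotient.eq_zero_iff_mem.mpr hx
    have := congrArg σ (h1.symm.trans h2)
    rwa [map_smul, map_zero, smul_eq_mul] at this

/-- Let `R` be `S`-perfect and `M` an `S`-divisible `R`-module. Then for any `s ∈ S`,
`r ∈ J(R)`, and `m n ∈ M`, there exists `(r', m') ∈ J(R) ⋉ M` with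
`(r, m) = (s, n) * (r', m')` in the trivial extension `R ⋉ M`; in particular the Jacobson
radical `J(R) ⋉ M` of `R ⋉ M` is `(S ⋉ 0)`-divisible. -/
theorem jacobson_trivSqZeroExt_divisible (R : Type u) [CommRing R] (S : Submonoid R)
    (hS : (0 : R) ∉ S)
    (M : Type u) [AddCommGroup M] [Module R M] [Module Rᵐᵒᵖ M] [IsCentralScalar R M]
    (hperf : ∀ (N : Type u) [AddCommGroup N] [Module R N],
        Module.Flat (Localization S) (LocalizedModule S N) → Module.Projective R N)
    (hdiv : ∀ s ∈ S, ∀ m : M, ∃ m' : M, m = s • m')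
    (s : R) (hs : s ∈ S) (r : R) (hr : r ∈ Ideal.jacobson (⊥ : Ideal R)) (m n : M) :
    ∃ r' : R, ∃ m' : M, r' ∈ Ideal.jacobson (⊥ : Ideal R) ∧
      (inl r + inr m : TrivSqZeroExt R M) =
        (inl s + inr n) * (inl r' + inr m') := by
  -- Step 1: `s` is von Neumann regular.
  have proj1 : Module.Projective R (R ⧸ Ideal.span {s}) := by
    apply hperf
    have : Subsingleton (LocalizedModule S (R ⧸ Ideal.span {s})) := by
      refine aux_subsingleton_localizedModule S _ s hs fun x => ?_
      induction x using Submodule.Quotient.induction_on with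
      | _ a =>
        rw [← Submodule.Quotient.mk_smul, Submodule.Quotient.mk_eq_zero]
        exact Ideal.mul_mem_right a _ (Ideal.subset_span rfl)
    have : Module.Free (Localization S) (LocalizedModule S (R ⧸ Ideal.span {s})) :=
      Module.Free.of_subsingleton _ _
    exact Module.Flat.of_free
  obtain ⟨f, hf1, hf2⟩ := aux_split (Ideal.span {s}) proj1
  obtain ⟨t, ht⟩ := Ideal.mem_span_singleton'.mp hf1
  -- so `t * s = 1 - f`, and `s * f = 0`
  have hsf : s * f = 0 := hf2 s (Ideal.subset_span rfl)
  have hsts : s * t * s = s := by linear_combination s * ht - hsf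
  -- Step 2: `a := r - t*s*r` satisfies `s * a = 0`, `(t*s) * a = 0`, `a ∈ J(R)`.
  have hsa : s * (r - t * s * r) = 0 := by linear_combination -r * hsts
  have hea : (t * s) * (r - t * s * r) = 0 := by linear_combination -(t * r) * hsts
  have haJ : r - t * s * r ∈ Ideal.jacobson (⊥ : Ideal R) :=
    Submodule.sub_mem _ hr (Ideal.mul_mem_left _ (t * s) hr)
  -- Step 3: `r - t*s*r = 0` using projectivity of `R ⧸ (t*s, r - t*s*r)`.
  have proj2 : Module.Projective R (R ⧸ Ideal.span {t * s, r - t * s * r}) := by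
    apply hperf
    have : Subsingleton
        (LocalizedModule S (R ⧸ Ideal.span {t * s, r - t * s * r})) := by
      refine aux_subsingleton_localizedModule S _ s hs fun x => ?_
      induction x using Submodule.Quotient.induction_on with
      | _ b =>
        rw [← Submodule.Quotient.mk_smul, Submodule.Quotient.mk_eq_zero]
        have hsmem : s ∈ Ideal.span {t * s, r - t * s * r} := by
          have hse : s = s * (t * s) := by linear_combination -hsts
          have hmem := Ideal.mul_mem_left _ s
            (Ideal.subset_span (s := {t * s, r - t * s * r}) (by simp) :
              t * s ∈ Ideal.span {t * s, r - t * s * r})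
          rwa [← hse] at hmem
        exact Ideal.mul_mem_right b _ hsmem
    have : Module.Free (Localization S)
        (LocalizedModule S (R ⧸ Ideal.span {t * s, r - t * s * r})) :=
      Module.Free.of_subsingleton _ _
    exact Module.Flat.of_free
  obtain ⟨g, hg1, hg2⟩ := aux_split (Ideal.span {t * s, r - t * s * r}) proj2
  obtain ⟨c, d, hcd⟩ := Ideal.mem_span_pair.mp hg1
  have hag : (r - t * s * r) * g = 0 := hg2 _ (Ideal.subset_span (by simp))
  have key : (r - t * s * r) * (1 - d * (r - t * s * r)) = 0 := by
    linear_combination (-(r - t * s * r)) * hcd + hag + c * hea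
  have hu : IsUnit (1 - d * (r - t * s * r)) := by
    have h := Ideal.mem_jacobson_bot.mp haJ (-d)
    have heq : (r - t * s * r) * (-d) + 1 = 1 - d * (r - t * s * r) := by ring
    rwa [heq] at h
  have ha0 : r - t * s * r = 0 := (IsUnit.mul_left_eq_zero hu).mp key
  have hr' : r = s * (t * r) := by linear_combination ha0
  have hr'J : t * r ∈ Ideal.jacobson (⊥ : Ideal R) := Ideal.mul_mem_left _ t hr
  -- Step 4: find `m'` with `m = s • m' + (t*r) • n`.
  obtain ⟨m', hm'⟩ := hdiv s hs (m - (t * r) • n)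
  refine ⟨t * r, m', hr'J, ?_⟩
  have hfst : (inl r + inr m : TrivSqZeroExt R M).fst =
      ((inl s + inr n) * (inl (t * r) + inr m') : TrivSqZeroExt R M).fst := by
    simp only [fst_add, fst_inl, fst_inr, fst_mul, add_zero, zero_add]
    exact hr'
  have hsnd : (inl r + inr m : TrivSqZeroExt R M).snd =
      ((inl s + inr n) * (inl (t * r) + inr m') : TrivSqZeroExt R M).snd := by
    simp only [snd_mul, snd_add, fst_add, fst_inl, fst_inr, snd_inl, snd_inr]
    rw [op_smul_eq_smul]
    have : m = s • m' + (t * r) • n := by rw [← hm']; abel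
    simpa using this
  exact TrivSqZeroExt.ext hfst hsnd
end
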